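/- arXiv:2409.10634 — 2 statements merged into one kernel-verified Lean document; each statement's English description precedes it below -/
import Mathlib

section
/- If A ⊆ F_2^n has coset complexity at most ℓ (i.e., A belongs to the ring of sets generated by at most ℓ cosets of subgroups), then 1_A can be written as ∑_{i=1}^{t} ε_i · 1_{W_i + a_i} with ε_i ∈ {−1, 1}, each W_i + a_i a coset, and t ≤ 3^ℓ. In particular, ‖1_A‖_A ≤ 3^ℓ. -/
open Finset
open scoped Classical

noncomputable def chi {n : ℕ} (a x : Fin n → ZMod 2) : ℝ :=
  if ∑ i, a i * x i = (0 : ZMod 2) then 1 else -1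

noncomputable def fhat {n : ℕ} (f : (Fin n → ZMod 2) → ℝ) (a : Fin n → ZMod 2) : ℝ :=
  (∑ x, f x * chi a x) / 2 ^ n

noncomputable def specNorm {n : ℕ} (f : (Fin n → ZMod 2) → ℝ) : ℝ :=
  ∑ a, |fhat f a|

noncomputable def ind {n : ℕ} (A : Set (Fin n → ZMod 2)) : (Fin n → ZMod 2) → ℝ :=
  fun x => if x ∈ A then 1 else 0

def IsCoset {n : ℕ} (C : Set (Fin n → ZMod 2)) : Prop :=
  ∃ (W : Submodule (ZMod 2) (Fin n → ZMod 2)) (c : Fin n → ZMod 2),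
    C = {x | x - c ∈ W}

/-- The ring of sets generated by a family `S` of sets: contains the members of `S`
and the full space, and is closed under complements, unions and intersections. -/
inductive InSetRing {α : Type*} (S : Set (Set α)) : Set α → Prop
  | base {A : Set α} : A ∈ S → InSetRing S A
  | univ : InSetRing S Set.univ
  | compl {A : Set α} : InSetRing S A → InSetRing S Aᶜ
  | union {A B : Set α} : InSetRing S A → InSetRing S B → InSetRing S (A ∪ B)
  | inter {A B : Set α} : InSetRing S A → InSetRing S B → InSetRing S (A ∩ B)

/-- `A` has coset complexity at most `ℓ`. -/
def CosetCplxLe {n : ℕ} (A : Set (Fin n → ZMod 2)) (ℓ : ℕ) : Prop :=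
  ∃ (t : ℕ) (C : Fin t → Set (Fin n → ZMod 2)),
    t ≤ ℓ ∧ (∀ i, IsCoset (C i)) ∧ InSetRing (Set.range C) A

/-!
A set in the ring generated by `C₁, …, C_t` is a union of atoms `⋂ᵢ Dᵢ` with each `Dᵢ` either
`Cᵢ` or `Cᵢᶜ`, so `1_A = ∑_σ ∏ᵢ (σᵢ ? 1_{Cᵢ} : 1 - 1_{Cᵢ})`. Multiplying out, a term picks at
each `i` one of `1_{Cᵢ}`, `1`, `-1_{Cᵢ}`, and the picks determine the atom; so `1_A` is a sum of
at most `3^t` signed indicators of intersections of the `Cᵢ`, which are cosets when nonempty.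
The Fourier transform of the indicator of a subgroup `W` is nonnegative, so
`‖1_W‖_A = ∑ₐ 1̂_W(a) = 1_W(0) = 1`; translating multiplies it by a character, and the triangle
inequality gives `‖1_A‖_A ≤ 3^t`.
-/

section SetRing

variable {α ι R : Type*} [Fintype ι] [CommRing R] {C : ι → Set α} {A : Set α}

theorem InSetRing.exists_finset_pattern (hA : InSetRing (Set.range C) A) :
    ∃ S : Finset (ι → Bool), ∀ x, x ∈ A ↔ (fun i => decide (x ∈ C i)) ∈ S := by
  induction hA with
  | base hA =>
    obtain ⟨j, rfl⟩ := hA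
    exact ⟨Finset.univ.filter (· j), fun x => by simp⟩
  | univ => exact ⟨Finset.univ, by simp⟩
  | compl _ ih =>
    obtain ⟨S, hS⟩ := ih
    exact ⟨Sᶜ, fun x => by simp [hS]⟩
  | union _ _ ih₁ ih₂ =>
    obtain ⟨S, hS⟩ := ih₁
    obtain ⟨S', hS'⟩ := ih₂
    exact ⟨S ∪ S', fun x => by simp [hS, hS']⟩
  | inter _ _ ih₁ ih₂ =>
    obtain ⟨S, hS⟩ := ih₁
    obtain ⟨S', hS'⟩ := ih₂
    exact ⟨S ∩ S', fun x => by simp [hS, hS']⟩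

/- A term of the expansion of `∏ᵢ (σᵢ ? 1_{C i} : 1 - 1_{C i})` is encoded by `τ : ι → Fin 3`:
`τ i = 0` picks `1_{C i}`, `τ i = 1` picks `1` and `τ i = 2` picks `-1_{C i}`. -/
def expansionSign (τ : ι → Fin 3) : R := ∏ i, if τ i = 2 then -1 else 1

def expansionSet (C : ι → Set α) (τ : ι → Fin 3) : Set α :=
  ⋂ i, if τ i = 1 then Set.univ else C i

lemma ite_decide_mem_eq_sum_fin_three (s : Set α) (x : α) (b : Bool) :
    (if decide (x ∈ s) = b then 1 else 0 : R) =
      ∑ j : Fin 3, if decide (j = 0) = b then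
        (if j = 2 then -1 else 1) * (if x ∈ (if j = 1 then Set.univ else s) then 1 else 0)
      else 0 := by
  cases b <;> by_cases hx : x ∈ s <;> simp [Fin.sum_univ_three, hx]

lemma expansionSign_eq_one_or_neg_one (τ : ι → Fin 3) :
    expansionSign τ = (1 : R) ∨ expansionSign τ = (-1 : R) := by
  unfold expansionSign
  refine prod_induction _ (fun r : R => r = 1 ∨ r = -1) ?_ (Or.inl rfl) fun i _ => ?_
  · rintro a b (rfl | rfl) (rfl | rfl) <;> simp
  · split_ifs <;> simp

lemma ite_pattern_eq_sum_expansion (σ : ι → Bool) (x : α) :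
    (if (fun i => decide (x ∈ C i)) = σ then 1 else 0 : R) =
      ∑ τ : ι → Fin 3, if (fun i => decide (τ i = 0)) = σ then
        expansionSign τ * (if x ∈ expansionSet C τ then 1 else 0) else 0 := by
  calc (if (fun i => decide (x ∈ C i)) = σ then 1 else 0 : R)
      = ∏ i, (if decide (x ∈ C i) = σ i then 1 else 0 : R) := by
        rw [Fintype.prod_boole]
        simp only [funext_iff]
    _ = ∏ i, ∑ j : Fin 3, if decide (j = 0) = σ i then
          (if j = 2 then -1 else 1) *
            (if x ∈ (if j = 1 then Set.univ else C i) then 1 else 0) else (0 : R) := by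
        simp_rw [ite_decide_mem_eq_sum_fin_three]
    _ = ∑ τ : ι → Fin 3, if (fun i => decide (τ i = 0)) = σ then
          ∏ i, (if τ i = 2 then -1 else 1) *
            (if x ∈ (if τ i = 1 then Set.univ else C i) then 1 else 0) else (0 : R) := by
        simp_rw [Fintype.prod_sum, Fintype.prod_ite_zero, funext_iff]
    _ = _ := by
        simp_rw [prod_mul_distrib, Fintype.prod_boole, expansionSet, Set.mem_iInter]
        rfl

theorem InSetRing.exists_indicator_eq_sum_expansion (hA : InSetRing (Set.range C) A) :
    ∃ T : Finset (ι → Fin 3), (∀ τ ∈ T, (expansionSet C τ).Nonempty) ∧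
      ∀ x, (if x ∈ A then 1 else 0 : R) =
        ∑ τ ∈ T, expansionSign τ * (if x ∈ expansionSet C τ then 1 else 0) := by
  obtain ⟨S, hS⟩ := hA.exists_finset_pattern
  refine ⟨Finset.univ.filter fun τ => (fun i => decide (τ i = 0)) ∈ S ∧ (expansionSet C τ).Nonempty,
    fun τ hτ => (mem_filter.1 hτ).2.2, fun x => ?_⟩
  calc (if x ∈ A then 1 else 0 : R)
      = ∑ σ ∈ S, if (fun i => decide (x ∈ C i)) = σ then 1 else 0 := by
        rw [sum_ite_eq]
        exact if_congr (hS x) rfl rfl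
    _ = ∑ τ : ι → Fin 3, if (fun i => decide (τ i = 0)) ∈ S then
          expansionSign τ * (if x ∈ expansionSet C τ then 1 else 0) else 0 := by
        simp_rw [ite_pattern_eq_sum_expansion]
        rw [sum_comm]
        simp_rw [sum_ite_eq]
    _ = _ := by
        rw [sum_filter]
        refine sum_congr rfl fun τ _ => ?_
        by_cases hD : (expansionSet C τ).Nonempty
        · simp [hD]
        · have hx : x ∉ expansionSet C τ := fun hx => hD ⟨x, hx⟩
          simp [hD, hx]

end SetRing

section Coset

variable {n : ℕ}

lemma isCoset_univ : IsCoset (Set.univ : Set (Fin n → ZMod 2)) :=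
  ⟨⊤, 0, by simp⟩

lemma IsCoset.exists_eq_setOf_sub_mem {C : Set (Fin n → ZMod 2)} (hC : IsCoset C)
    {e : Fin n → ZMod 2} (he : e ∈ C) :
    ∃ W : Submodule (ZMod 2) (Fin n → ZMod 2), C = {x | x - e ∈ W} := by
  obtain ⟨W, c, rfl⟩ := hC
  refine ⟨W, Set.ext fun x => ⟨fun hx => ?_, fun hx => ?_⟩⟩
  · simpa using W.sub_mem hx he
  · simpa using W.add_mem hx he

lemma isCoset_iInter {ι : Type*} {C : ι → Set (Fin n → ZMod 2)} (hC : ∀ i, IsCoset (C i))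
    (hne : (⋂ i, C i).Nonempty) : IsCoset (⋂ i, C i) := by
  obtain ⟨e, he⟩ := hne
  choose W hW using fun i => (hC i).exists_eq_setOf_sub_mem (Set.mem_iInter.1 he i)
  refine ⟨⨅ i, W i, e, Set.ext fun x => ?_⟩
  simp only [Set.mem_iInter, Submodule.mem_iInf]
  exact forall_congr' fun i => by rw [hW i]; rfl

lemma isCoset_expansionSet {ι : Type*} [Fintype ι] {C : ι → Set (Fin n → ZMod 2)}
    (hC : ∀ i, IsCoset (C i)) (τ : ι → Fin 3) (hne : (expansionSet C τ).Nonempty) :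
    IsCoset (expansionSet C τ) :=
  isCoset_iInter (fun i => by split_ifs; exacts [isCoset_univ, hC i]) hne

end Coset

lemma sum_eq_zero_of_add_right_eq_neg {G : Type*} [AddGroup G] [Fintype G] (g : G → ℝ) (d : G)
    (h : ∀ x, g (x + d) = -g x) : ∑ x, g x = 0 := by
  have := Equiv.sum_comp (Equiv.addRight d) g
  simp only [Equiv.coe_addRight, h, sum_neg_distrib] at this
  linarith

section Fourier

variable {n : ℕ}

lemma ite_add_eq_zero_zmod_two (u v : ZMod 2) :
    (if u + v = 0 then 1 else -1 : ℝ) = (if u = 0 then 1 else -1) * (if v = 0 then 1 else -1) := by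
  have h01 : ∀ w : ZMod 2, w = 0 ∨ w = 1 := by decide
  rcases h01 u with rfl | rfl <;> rcases h01 v with rfl | rfl <;>
    simp [show (1 + 1 : ZMod 2) = 0 from rfl]

lemma chi_add_right (a x y : Fin n → ZMod 2) : chi a (x + y) = chi a x * chi a y := by
  simp only [chi, Pi.add_apply, mul_add, sum_add_distrib]
  exact ite_add_eq_zero_zmod_two _ _

lemma chi_comm (a x : Fin n → ZMod 2) : chi a x = chi x a := by
  simp only [chi, mul_comm]

lemma chi_add_left (a b x : Fin n → ZMod 2) : chi (a + b) x = chi a x * chi b x := by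
  rw [chi_comm, chi_add_right, chi_comm x, chi_comm x]

lemma chi_zero_right (a : Fin n → ZMod 2) : chi a 0 = 1 := by
  simp [chi]

lemma chi_eq_one_or_neg_one (a x : Fin n → ZMod 2) : chi a x = 1 ∨ chi a x = -1 := by
  unfold chi
  split_ifs <;> simp

lemma abs_chi (a x : Fin n → ZMod 2) : |chi a x| = 1 := by
  rcases chi_eq_one_or_neg_one a x with h | h <;> simp [h]

lemma sum_chi_left_eq_zero {x : Fin n → ZMod 2} (hx : x ≠ 0) : ∑ a, chi a x = 0 := by
  obtain ⟨i, hi⟩ : ∃ i, x i ≠ 0 := Function.ne_iff.1 hx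
  have hsingle : chi (Pi.single i 1) x = -1 := by
    simp [chi, Pi.single_apply, ite_mul, hi]
  exact sum_eq_zero_of_add_right_eq_neg _ (Pi.single i 1) fun a => by
    rw [chi_add_left, hsingle, mul_neg_one]

lemma sum_fhat (f : (Fin n → ZMod 2) → ℝ) : ∑ a, fhat f a = f 0 := by
  simp only [fhat, ← sum_div]
  rw [sum_comm]
  simp_rw [← mul_sum]
  rw [sum_eq_single 0 (fun x _ hx => by rw [sum_chi_left_eq_zero hx, mul_zero]) (by simp)]
  simp [chi_zero_right]

lemma fhat_ind_submodule_nonneg (W : Submodule (ZMod 2) (Fin n → ZMod 2)) (a : Fin n → ZMod 2) :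
    0 ≤ fhat (ind (W : Set (Fin n → ZMod 2))) a := by
  refine div_nonneg ?_ (by positivity)
  by_cases h : ∀ w ∈ W, chi a w = 1
  · refine sum_nonneg fun x _ => ?_
    by_cases hx : x ∈ W <;> simp [ind, hx, h]
  · push Not at h
    obtain ⟨w, hw, hchi⟩ := h
    have hchi : chi a w = -1 := (chi_eq_one_or_neg_one a w).resolve_left hchi
    refine (sum_eq_zero_of_add_right_eq_neg _ w fun x => ?_).ge
    simp only [ind, SetLike.mem_coe, add_mem_cancel_right hw, chi_add_right, hchi]
    ring

lemma fhat_ind_coset (W : Submodule (ZMod 2) (Fin n → ZMod 2)) (c a : Fin n → ZMod 2) :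
    fhat (ind {x | x - c ∈ W}) a = chi a c * fhat (ind (W : Set (Fin n → ZMod 2))) a := by
  simp only [fhat, mul_div_assoc', mul_sum]
  congr 1
  rw [← Equiv.sum_comp (Equiv.addRight c)]
  refine sum_congr rfl fun x _ => ?_
  simp only [ind, Equiv.coe_addRight, Set.mem_ofPred_eq, add_sub_cancel_right, SetLike.mem_coe,
    chi_add_right]
  ring

lemma specNorm_ind_submodule (W : Submodule (ZMod 2) (Fin n → ZMod 2)) :
    specNorm (ind (W : Set (Fin n → ZMod 2))) = 1 := by
  simp only [specNorm, abs_of_nonneg (fhat_ind_submodule_nonneg W _), sum_fhat]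
  simp [ind, W.zero_mem]

lemma specNorm_ind_of_isCoset {C : Set (Fin n → ZMod 2)} (hC : IsCoset C) :
    specNorm (ind C) = 1 := by
  obtain ⟨W, c, rfl⟩ := hC
  simp only [specNorm, fhat_ind_coset, abs_mul, abs_chi, one_mul]
  exact specNorm_ind_submodule W

lemma fhat_sum_mul {ι : Type*} (s : Finset ι) (ε : ι → ℝ) (g : ι → (Fin n → ZMod 2) → ℝ)
    (a : Fin n → ZMod 2) :
    fhat (fun x => ∑ i ∈ s, ε i * g i x) a = ∑ i ∈ s, ε i * fhat (g i) a := by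
  simp only [fhat, sum_mul, mul_sum, mul_assoc, sum_div, mul_div_assoc]
  exact sum_comm

lemma specNorm_sum_mul_le {ι : Type*} (s : Finset ι) (ε : ι → ℝ)
    (g : ι → (Fin n → ZMod 2) → ℝ) :
    specNorm (fun x => ∑ i ∈ s, ε i * g i x) ≤ ∑ i ∈ s, |ε i| * specNorm (g i) := by
  simp only [specNorm, fhat_sum_mul, mul_sum]
  rw [sum_comm]
  exact sum_le_sum fun a _ => (abs_sum_le_sum_abs _ _).trans_eq (by simp only [abs_mul])

lemma specNorm_le_card_of_eq_sum_signed_cosets {ι : Type*} [Fintype ι] {ε : ι → ℝ}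
    {C : ι → Set (Fin n → ZMod 2)} {f : (Fin n → ZMod 2) → ℝ}
    (hε : ∀ i, ε i = 1 ∨ ε i = -1) (hC : ∀ i, IsCoset (C i))
    (hf : ∀ x, f x = ∑ i, ε i * ind (C i) x) : specNorm f ≤ Fintype.card ι := by
  obtain rfl : f = fun x => ∑ i, ε i * ind (C i) x := funext hf
  refine (specNorm_sum_mul_le _ _ _).trans_eq ?_
  have habs : ∀ i, |ε i| = 1 := fun i => by rcases hε i with h | h <;> simp [h]
  simp [habs, specNorm_ind_of_isCoset (hC _)]

end Fourier

theorem CosetCplxLe.exists_eq_sum_signed_cosets {n ℓ : ℕ} {A : Set (Fin n → ZMod 2)}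
    (h : CosetCplxLe A ℓ) :
    ∃ (t : ℕ) (ε : Fin t → ℝ) (C : Fin t → Set (Fin n → ZMod 2)),
      t ≤ 3 ^ ℓ ∧ (∀ i, ε i = 1 ∨ ε i = -1) ∧ (∀ i, IsCoset (C i)) ∧
        ∀ x, ind A x = ∑ i, ε i * ind (C i) x := by
  obtain ⟨t, C, htℓ, hC, hA⟩ := h
  obtain ⟨T, hTne, hrep⟩ := hA.exists_indicator_eq_sum_expansion (R := ℝ)
  let τ : Fin #T → Fin t → Fin 3 := fun i => T.equivFin.symm i
  refine ⟨#T, fun i => expansionSign (τ i), fun i => expansionSet C (τ i), ?_,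
    fun i => expansionSign_eq_one_or_neg_one _,
    fun i => isCoset_expansionSet hC _ (hTne _ (T.equivFin.symm i).2), fun x => ?_⟩
  · calc #T ≤ Fintype.card (Fin t → Fin 3) := card_le_univ T
      _ = 3 ^ t := by simp
      _ ≤ 3 ^ ℓ := Nat.pow_le_pow_right (by norm_num) htℓ
  · rw [ind, hrep x, ← sum_coe_sort T]
    exact (Equiv.sum_comp T.equivFin.symm _).symm

theorem stmt4 {n : ℕ} (A : Set (Fin n → ZMod 2)) (ℓ : ℕ) (h : CosetCplxLe A ℓ) :
    (∃ (t : ℕ) (ε : Fin t → ℝ) (C : Fin t → Set (Fin n → ZMod 2)),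
      t ≤ 3 ^ ℓ ∧ (∀ i, ε i = 1 ∨ ε i = -1) ∧ (∀ i, IsCoset (C i)) ∧
        ∀ x, ind A x = ∑ i, ε i * ind (C i) x) ∧
      specNorm (ind A) ≤ 3 ^ ℓ := by
  refine ⟨h.exists_eq_sum_signed_cosets, ?_⟩
  obtain ⟨t, ε, C, htℓ, hε, hC, hA⟩ := h.exists_eq_sum_signed_cosets
  calc specNorm (ind A) ≤ Fintype.card (Fin t) :=
        specNorm_le_card_of_eq_sum_signed_cosets hε hC hA
    _ ≤ 3 ^ ℓ := by rw [Fintype.card_fin]; exact_mod_cast htℓ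
end

section
/- Let A ⊆ F_2^n, ε ∈ [0, 1/2), δ ∈ (0, 1/2), and g : F_2^n → ℝ with ‖1_A − g‖_∞ ≤ ε. Suppose W is a subgroup and there exist c₁, c₂ ∈ F_2^n with E[1_A | W + c₁] ≥ 1 − δ and E[1_A | W + c₂] ≤ δ. Then ∑_{r ∈ W^⊥, r ≠ 0} |ĝ(r)| ≥ (1 − 2ε − 2δ)/2. -/
/-!
Fourier inversion on cosets: from the orthogonality relation
`∑_{r ∈ W^⊥} χ_r(y) = |W^⊥| 1_W(y)` (the double annihilator of `W` is `W`) and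
`|W| |W^⊥| = 2^n` one gets `E[g | W + c] = ∑_{r ∈ W^⊥} ĝ(r) χ_r(c)`. As `g` is `ε`-close to `1_A`,
the averages of `g` over `W + c₁` and `W + c₂` differ by at least `1 - 2δ - 2ε`; in the difference
of their Fourier expansions the `r = 0` terms cancel and every other term is at most `2 |ĝ(r)|`.
-/

open Finset
open scoped Classical

noncomputable def cosetAvg {n : ℕ} (f : (Fin n → ZMod 2) → ℝ)
    (W : Submodule (ZMod 2) (Fin n → ZMod 2)) (c : Fin n → ZMod 2) : ℝ :=
  (∑ x ∈ univ.filter (fun x : Fin n → ZMod 2 => x - c ∈ W), f x) /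
    (univ.filter (fun x : Fin n → ZMod 2 => x - c ∈ W)).card

section DotAnnihilator

variable {K ι : Type*} [Field K] [Fintype ι] [DecidableEq ι]

/-- The paper's `W^⊥`. -/
def dotAnnihilator (W : Submodule K (ι → K)) : Submodule K (ι → K) :=
  W.dualAnnihilator.comap (dotProductEquiv K ι).toLinearMap

variable {W : Submodule K (ι → K)}

lemma mem_dotAnnihilator {r : ι → K} : r ∈ dotAnnihilator W ↔ ∀ w ∈ W, r ⬝ᵥ w = 0 := by
  simp [dotAnnihilator, Submodule.mem_dualAnnihilator]

lemma exists_mem_dotAnnihilator_dotProduct_ne_zero {y : ι → K} (hy : y ∉ W) :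
    ∃ r ∈ dotAnnihilator W, r ⬝ᵥ y ≠ 0 := by
  rw [← Subspace.forall_mem_dualAnnihilator_apply_eq_zero_iff] at hy
  push Not at hy
  obtain ⟨φ, hφ, hφy⟩ := hy
  refine ⟨(dotProductEquiv K ι).symm φ, ?_, ?_⟩
  · simpa [dotAnnihilator] using hφ
  · rwa [← dotProductEquiv_apply_apply, LinearEquiv.apply_symm_apply]

lemma natCard_mul_natCard_dotAnnihilator [Finite K] (W : Submodule K (ι → K)) :
    Nat.card W * Nat.card (dotAnnihilator W) = Nat.card K ^ Fintype.card ι := by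
  have : Nat.card (dotAnnihilator W) = Nat.card W.dualAnnihilator :=
    Nat.card_congr ((dotProductEquiv K ι).toEquiv.subtypeEquiv fun _ ↦ Iff.rfl)
  rw [this, Module.natCard_eq_pow_finrank (K := K) (V := W),
    Module.natCard_eq_pow_finrank (K := K) (V := W.dualAnnihilator),
    ← pow_add, Subspace.finrank_add_finrank_dualAnnihilator_eq, Module.finrank_fintype_fun_eq_card]

end DotAnnihilator

lemma Submodule.card_filter_sub_mem {R M : Type*} [Ring R] [AddCommGroup M] [Module R M]
    [Fintype M] (W : Submodule R M) (c : M) :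
    #{x | x - c ∈ W} = Nat.card W := by
  rw [← Fintype.card_subtype, ← Nat.card_eq_fintype_card]
  exact Nat.card_congr ((Equiv.subRight c).subtypeEquiv fun _ ↦ Iff.rfl)

lemma AddChar.sum_filter_mem_eq_zero {G R : Type*} [AddGroup G] [Fintype G] [CommRing R]
    [IsDomain R] (ψ : AddChar G R) (S : AddSubgroup G) [DecidablePred (· ∈ S)] {s : G}
    (hs : s ∈ S) (hψs : ψ s ≠ 1) : ∑ r ∈ univ.filter (· ∈ S), ψ r = 0 := by
  rw [Finset.sum_subtype _ (p := (· ∈ S)) (by simp)]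
  exact AddChar.sum_eq_zero_of_ne_one (ψ := ψ.compAddMonoidHom S.subtype)
    (AddChar.ne_one_iff.2 ⟨⟨s, hs⟩, hψs⟩)

def signChar : AddChar (ZMod 2) ℝ where
  toFun t := if t = 0 then 1 else -1
  map_zero_eq_one' := if_pos rfl
  map_add_eq_mul' a b := by
    have hab : a + b = 0 ↔ (a = 0 ↔ b = 0) := by revert a b; decide
    by_cases ha : a = 0 <;> by_cases hb : b = 0 <;> simp [ha, hb, hab]

lemma signChar_apply (t : ZMod 2) : signChar t = if t = 0 then 1 else -1 := rfl

section Character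

variable {n : ℕ}

lemma chi_eq_signChar (a x : Fin n → ZMod 2) : chi a x = signChar (a ⬝ᵥ x) := rfl

def chiChar (y : Fin n → ZMod 2) : AddChar (Fin n → ZMod 2) ℝ :=
  signChar.compAddMonoidHom (AddMonoidHom.mk' (· ⬝ᵥ y) fun a b ↦ add_dotProduct a b y)

lemma chiChar_apply (y r : Fin n → ZMod 2) : chiChar y r = signChar (r ⬝ᵥ y) := rfl

lemma chi_sub_right (r x c : Fin n → ZMod 2) : chi r (x - c) = chi r x * chi r c := by
  simp only [chi_eq_signChar, dotProduct_sub, CharTwo.sub_eq_add, AddChar.map_add_eq_mul]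

lemma abs_chi_le_one (r x : Fin n → ZMod 2) : |chi r x| ≤ 1 := by
  unfold chi; split <;> simp

lemma chi_zero_left (x : Fin n → ZMod 2) : chi 0 x = 1 := by simp [chi]

end Character

section CosetAverage

variable {n : ℕ} (W : Submodule (ZMod 2) (Fin n → ZMod 2))

lemma sum_chi_dotAnnihilator (y : Fin n → ZMod 2) :
    ∑ r ∈ univ.filter (· ∈ dotAnnihilator W), chi r y
      = if y ∈ W then (Nat.card (dotAnnihilator W) : ℝ) else 0 := by
  split_ifs with hy
  · have hr : ∀ r ∈ univ.filter (· ∈ dotAnnihilator W), chi r y = 1 := fun r hr ↦ by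
      rw [chi_eq_signChar, (mem_dotAnnihilator.1 (mem_filter.1 hr).2) y hy,
        AddChar.map_zero_eq_one]
    rw [sum_congr rfl hr, sum_const, nsmul_one, ← Fintype.card_subtype, ← Nat.card_eq_fintype_card]
  · obtain ⟨r₀, hr₀, hr₀y⟩ := exists_mem_dotAnnihilator_dotProduct_ne_zero hy
    exact (chiChar y).sum_filter_mem_eq_zero (dotAnnihilator W).toAddSubgroup hr₀
      (by rw [chiChar_apply, signChar_apply, if_neg hr₀y]; norm_num)

lemma cosetAvg_eq_sum_fhat_mul_chi (g : (Fin n → ZMod 2) → ℝ) (c : Fin n → ZMod 2) :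
    cosetAvg g W c = ∑ r ∈ univ.filter (· ∈ dotAnnihilator W), fhat g r * chi r c := by
  have hcard : (Nat.card W : ℝ) * Nat.card (dotAnnihilator W) = 2 ^ n := by
    exact_mod_cast (natCard_mul_natCard_dotAnnihilator W).trans (by simp)
  have hW : (Nat.card W : ℝ) ≠ 0 := by simp
  symm
  calc ∑ r ∈ univ.filter (· ∈ dotAnnihilator W), fhat g r * chi r c
      = (∑ x, g x * ∑ r ∈ univ.filter (· ∈ dotAnnihilator W), chi r (x - c)) / 2 ^ n := by
        simp only [fhat, chi_sub_right, Finset.mul_sum, Finset.sum_div, div_mul_eq_mul_div,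
          Finset.sum_mul]
        rw [Finset.sum_comm]
        simp only [mul_assoc]
    _ = Nat.card (dotAnnihilator W) * (∑ x ∈ univ.filter (fun x ↦ x - c ∈ W), g x) / 2 ^ n := by
        simp only [sum_chi_dotAnnihilator, mul_ite, mul_zero, ← Finset.sum_filter, Finset.mul_sum,
          mul_comm]
    _ = cosetAvg g W c := by
        rw [cosetAvg, Submodule.card_filter_sub_mem, ← hcard]
        field_simp

lemma abs_cosetAvg_sub_cosetAvg_le {f g : (Fin n → ZMod 2) → ℝ} {ε : ℝ}
    (hfg : ∀ x, |f x - g x| ≤ ε) (c : Fin n → ZMod 2) :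
    |cosetAvg f W c - cosetAvg g W c| ≤ ε := by
  have hcard : (0 : ℝ) < #{x | x - c ∈ W} := by
    rw [Submodule.card_filter_sub_mem]; exact_mod_cast Nat.card_pos
  rw [cosetAvg, cosetAvg, ← sub_div, ← sum_sub_distrib, abs_div, abs_of_pos hcard,
    div_le_iff₀ hcard]
  calc |∑ x ∈ univ.filter (fun x ↦ x - c ∈ W), (f x - g x)|
      ≤ ∑ x ∈ univ.filter (fun x ↦ x - c ∈ W), |f x - g x| := abs_sum_le_sum_abs _ _
    _ ≤ ε * #{x | x - c ∈ W} := by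
      rw [mul_comm, ← nsmul_eq_mul]; exact sum_le_card_nsmul _ _ _ fun x _ ↦ hfg x

lemma cosetAvg_sub_cosetAvg_le (g : (Fin n → ZMod 2) → ℝ) (c₁ c₂ : Fin n → ZMod 2) :
    cosetAvg g W c₁ - cosetAvg g W c₂
      ≤ 2 * ∑ r ∈ (univ.filter (· ∈ dotAnnihilator W)).erase 0, |fhat g r| := by
  have hzero : fhat g 0 * (chi 0 c₁ - chi 0 c₂) = 0 := by simp [chi_zero_left]
  rw [cosetAvg_eq_sum_fhat_mul_chi, cosetAvg_eq_sum_fhat_mul_chi, ← sum_sub_distrib]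
  simp only [← mul_sub]
  rw [← sum_erase _ (f := fun r ↦ fhat g r * (chi r c₁ - chi r c₂)) hzero, mul_sum]
  refine sum_le_sum fun r _ ↦ ?_
  calc fhat g r * (chi r c₁ - chi r c₂) ≤ |fhat g r| * |chi r c₁ - chi r c₂| :=
        (le_abs_self _).trans (abs_mul _ _).le
    _ ≤ |fhat g r| * 2 := by
        gcongr
        linarith [abs_sub (chi r c₁) (chi r c₂), abs_chi_le_one r c₁, abs_chi_le_one r c₂]
    _ = 2 * |fhat g r| := mul_comm _ _

end CosetAverage

theorem stmt13_general {n : ℕ} (A : Set (Fin n → ZMod 2)) (ε δ : ℝ)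
    (g : (Fin n → ZMod 2) → ℝ) (hg : ∀ x, |ind A x - g x| ≤ ε)
    (W : Submodule (ZMod 2) (Fin n → ZMod 2)) (c₁ c₂ : Fin n → ZMod 2)
    (h₁ : cosetAvg (ind A) W c₁ ≥ 1 - δ) (h₂ : cosetAvg (ind A) W c₂ ≤ δ) :
    ∑ r ∈ (univ.filter
        (fun r : Fin n → ZMod 2 => ∀ w ∈ W, ∑ i, r i * w i = (0 : ZMod 2))).erase 0,
      |fhat g r| ≥ (1 - 2 * ε - 2 * δ) / 2 := by
  have hannih : univ.filter (fun r : Fin n → ZMod 2 => ∀ w ∈ W, ∑ i, r i * w i = (0 : ZMod 2))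
      = univ.filter (· ∈ dotAnnihilator W) :=
    filter_congr fun r _ ↦ mem_dotAnnihilator.symm
  have hc₁ := abs_le.1 (abs_cosetAvg_sub_cosetAvg_le W hg c₁)
  have hc₂ := abs_le.1 (abs_cosetAvg_sub_cosetAvg_le W hg c₂)
  have := cosetAvg_sub_cosetAvg_le W g c₁ c₂
  rw [hannih]
  linarith

theorem stmt13 {n : ℕ} (A : Set (Fin n → ZMod 2)) (ε δ : ℝ)
    (hε0 : 0 ≤ ε) (hε : ε < 1 / 2) (hδ0 : 0 < δ) (hδ : δ < 1 / 2)
    (g : (Fin n → ZMod 2) → ℝ) (hg : ∀ x, |ind A x - g x| ≤ ε)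
    (W : Submodule (ZMod 2) (Fin n → ZMod 2)) (c₁ c₂ : Fin n → ZMod 2)
    (h₁ : cosetAvg (ind A) W c₁ ≥ 1 - δ) (h₂ : cosetAvg (ind A) W c₂ ≤ δ) :
    ∑ r ∈ (univ.filter
        (fun r : Fin n → ZMod 2 => ∀ w ∈ W, ∑ i, r i * w i = (0 : ZMod 2))).erase 0,
      |fhat g r| ≥ (1 - 2 * ε - 2 * δ) / 2 :=
  stmt13_general A ε δ g hg W c₁ c₂ h₁ h₂
end
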